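/- Let 𝕄 = (M_1, …, M_k) be a tuple of matroids and 𝔹 = (B_1, …, B_k) a feasible basis sequence of 𝕄. Suppose W is a shortcut-free tadpole-walk in the exchangeability graph D(𝕄, 𝔹) and W' is a valid subgraph of W. Then 𝔹 △ W' := (B_1 △ (W' ∩ A_1), …, B_k △ (W' ∩ A_k)) is a feasible basis sequence of 𝕄, where for an arc set N ⊆ A_i that forms a matching, B_i △ N denotes the set obtained from B_i by removing the tails of arcs in N and adding their heads. -/

import Mathlib

universe u

/-- A matroid given by its finite ground set and its nonempty family of bases
satisfying the basis exchange axiom. -/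
structure FinMatroid (α : Type u) [DecidableEq α] where
  E : Finset α
  Bases : Finset α → Prop
  bases_subset_ground : ∀ B, Bases B → B ⊆ E
  bases_nonempty : ∃ B, Bases B
  basis_exchange : ∀ B B', Bases B → Bases B' → ∀ x ∈ B, x ∉ B' →
    ∃ y ∈ B', y ∉ B ∧ Bases (insert y (B.erase x))

variable {α : Type u} [DecidableEq α] {k : ℕ}

/-- A feasible basis sequence: each `B i` is a basis of `M i` and the bases are
pairwise disjoint. -/
def FeasibleSeq (M : Fin k → FinMatroid α) (B : Fin k → Finset α) : Prop :=
  (∀ i, (M i).Bases (B i)) ∧ ∀ i j, i ≠ j → Disjoint (B i) (B j)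

/-- Two feasible basis sequences are adjacent if they differ in exactly one
coordinate `i`, by a single exchange `B' i = (B i \ {x}) ∪ {y}` with `x ∈ B i`
and `y ∈ E i \ B i`. -/
def AdjacentSeq (M : Fin k → FinMatroid α) (B B' : Fin k → Finset α) : Prop :=
  ∃ i : Fin k, (∀ j, j ≠ i → B j = B' j) ∧
    ∃ x ∈ B i, ∃ y ∈ (M i).E, y ∉ B i ∧ B' i = insert y ((B i).erase x)

/-- A reconfiguration sequence of length `ℓ` from `B` to `B'`. -/
def ReconfigSeq (M : Fin k → FinMatroid α) (B B' : Fin k → Finset α) (ℓ : ℕ) : Prop :=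
  ∃ seq : ℕ → Fin k → Finset α, seq 0 = B ∧ seq ℓ = B' ∧
    (∀ t ≤ ℓ, FeasibleSeq M (seq t)) ∧
    ∀ t < ℓ, AdjacentSeq M (seq t) (seq (t + 1))

/-- `B` is reconfigurable to `B'`. -/
def Reconfigurable (M : Fin k → FinMatroid α) (B B' : Fin k → Finset α) : Prop :=
  ∃ ℓ : ℕ, ReconfigSeq M B B' ℓ

/-- The ground set `⋃ i, E i` of the matroid union. -/
def UnionGround (M : Fin k → FinMatroid α) : Finset α :=
  Finset.univ.biUnion fun i => (M i).E

/-- Sets of the form `B 1 ∪ ⋯ ∪ B k` with each `B i` a basis of `M i`. -/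
def IsUnionCandidate (M : Fin k → FinMatroid α) (U : Finset α) : Prop :=
  ∃ b : Fin k → Finset α, (∀ i, (M i).Bases (b i)) ∧ U = Finset.univ.biUnion b

/-- Bases of the matroid union `⋁ i, M i`: maximal sets among unions of bases. -/
def IsUnionBasis (M : Fin k → FinMatroid α) (U : Finset α) : Prop :=
  IsUnionCandidate M U ∧ ∀ V, IsUnionCandidate M V → U ⊆ V → U = V

/-- A coloop of the matroid union: an element of every basis of `⋁ i, M i`. -/
def IsUnionColoop (M : Fin k → FinMatroid α) (x : α) : Prop :=
  ∀ U, IsUnionBasis M U → x ∈ U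

/-- The arc set `A i` of the exchangeability graph `D(M i, B i)`:
`(x, y)` with `x ∈ B i`, `y ∈ E i \ B i` and `(B i \ {x}) ∪ {y}` a basis. -/
def ArcOf (M : Fin k → FinMatroid α) (B : Fin k → Finset α) (i : Fin k) (a : α × α) : Prop :=
  a.1 ∈ B i ∧ a.2 ∈ (M i).E ∧ a.2 ∉ B i ∧ (M i).Bases (insert a.2 ((B i).erase a.1))

/-- Arcs of the exchangeability graph `D(𝕄, 𝔹)`. -/
def ArcD (M : Fin k → FinMatroid α) (B : Fin k → Finset α) (a : α × α) : Prop :=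
  ∃ i, ArcOf M B i a

/-- A vertex of `D(𝕄, 𝔹)` lying in `E \ ⋃ i, B i`. -/
def FreeVertex (M : Fin k → FinMatroid α) (B : Fin k → Finset α) (v : α) : Prop :=
  v ∈ UnionGround M ∧ ∀ i, v ∉ B i

/-- A tadpole-walk `(x 0, …, x m = x 0, …, x n)` in `D(𝕄, 𝔹)`: the first part
(up to `m`) is a (possibly empty) directed cycle, the rest is a directed path,
the vertices are distinct except `x 0 = x m`, and `x n ∈ E \ ⋃ i, B i`. -/
structure TadpoleWalk (M : Fin k → FinMatroid α) (B : Fin k → Finset α) where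
  n : ℕ
  m : ℕ
  x : ℕ → α
  m_lt_n : m < n
  closed : x m = x 0
  arc : ∀ t < n, ArcD M B (x t, x (t + 1))
  distinct : ∀ s t, s < t → t ≤ n → x s = x t → s = 0 ∧ t = m
  last_free : FreeVertex M B (x n)

/-- The order `≺` on the vertices of a tadpole-walk with cycle length `m`,
expressed on positions: the vertex at position `p` precedes the vertex at
position `q` iff `x q` is not the smallest vertex `x 0 = x m` and either `x p`
is the smallest vertex or `p < q`. -/
def TadpolePrec (m p q : ℕ) : Prop :=
  ¬(q = 0 ∨ q = m) ∧ ((p = 0 ∨ p = m) ∨ p < q)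

/-- A tadpole-walk is shortcut-free if for any two of its arcs `a, a'` lying in
the same `A i` with `tail a ≺ tail a'`, the pair `(tail a, head a')` is not an
arc of `A i`. -/
def ShortcutFree {M : Fin k → FinMatroid α} {B : Fin k → Finset α}
    (W : TadpoleWalk M B) : Prop :=
  ∀ i : Fin k, ∀ p < W.n, ∀ q < W.n,
    ArcOf M B i (W.x p, W.x (p + 1)) → ArcOf M B i (W.x q, W.x (q + 1)) →
      TadpolePrec W.m p q → ¬ ArcOf M B i (W.x p, W.x (q + 1))

/-- The set of arcs of a tadpole-walk. -/
def ArcsOfWalk {M : Fin k → FinMatroid α} {B : Fin k → Finset α}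
    (W : TadpoleWalk M B) : Set (α × α) :=
  {a | ∃ t, t < W.n ∧ a = (W.x t, W.x (t + 1))}

/-- The consecutive arcs of a directed path given by its list of vertices. -/
def pathArcs {β : Type u} (P : List β) : List (β × β) := P.zip P.tail

/-- The arcs of a directed cycle given by its list of vertices (including the
closing arc back to the first vertex). -/
def cycleArcs {β : Type u} : List β → List (β × β)
  | [] => []
  | v :: rest => (v :: rest).zip (rest ++ [v])

/-- A valid subgraph of `D(𝕄, 𝔹)`, given by its arc set `S`: the disjoint
union of a (possibly empty) directed path ending at a vertex of
`E \ ⋃ i, B i` and a (possibly empty) directed cycle. -/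
def IsValidArcSet (M : Fin k → FinMatroid α) (B : Fin k → Finset α)
    (S : Finset (α × α)) : Prop :=
  ∃ P C : List α,
    P.Nodup ∧ C.Nodup ∧ (∀ v ∈ P, v ∉ C) ∧
    (∀ a ∈ pathArcs P, ArcD M B a) ∧
    (∀ a ∈ cycleArcs C, ArcD M B a) ∧
    (∀ v, P.getLast? = some v → FreeVertex M B v) ∧
    S = (pathArcs P ++ cycleArcs C).toFinset

open Classical in
/-- `B i △ (S ∩ A i)`: remove from `B i` the tails of the arcs of `S` lying in
`A i` and add their heads. -/
noncomputable def applyArcs (M : Fin k → FinMatroid α) (B : Fin k → Finset α)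
    (S : Finset (α × α)) (i : Fin k) : Finset α :=
  (B i \ (S.filter fun a => ArcOf M B i a).image Prod.fst) ∪
    (S.filter fun a => ArcOf M B i a).image Prod.snd

/-- `M` is the partition matroid with blocks `P j` and ranks `r j`. -/
def IsPartitionStructure (M : FinMatroid α) {t : ℕ} (P : Fin t → Finset α)
    (r : Fin t → ℕ) : Prop :=
  (∀ j j', j ≠ j' → Disjoint (P j) (P j')) ∧
  Finset.univ.biUnion P = M.E ∧
  (∀ j, r j ≤ (P j).card) ∧
  ∀ B : Finset α, M.Bases B ↔ B ⊆ M.E ∧ ∀ j, (B ∩ P j).card = r j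

/-!
In each coordinate `i`, the arcs of `S` in `A i` form a matching. Ordered by their position on the
walk (the base point of the cycle first), shortcut-freeness says that the tail of an earlier arc
never lies in the fundamental circuit of the head of a later one. Exchanging along the first arc
therefore leaves the fundamental circuits of all later heads unchanged, and induction shows that
`B i △ (S ∩ A i)` is a basis. For disjointness: the heads of `S` are distinct, and a head that
lies in some `B j` is not free, so it is the tail of the next arc of `S`, which lies in `A j`;
hence it is removed from `B j`.
-/

namespace Matroid

open Set

variable {β : Type*} {M : Matroid β} {B : Set β} {e f x y : β}

lemma IsBase.insert_sdiff_isBase_iff_mem_fundCircuit (hB : M.IsBase B) (he : e ∈ M.E \ B)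
    (hf : f ∈ B) : M.IsBase (insert e (B \ {f})) ↔ f ∈ M.fundCircuit e B := by
  have hef : e ≠ f := fun h => he.2 (h ▸ hf)
  rw [hB.indep.mem_fundCircuit_iff (by rw [hB.closure_eq]; exact he.1) he.2,
    ← Set.insert_sdiff_singleton_comm hef]
  exact ⟨IsBase.indep, hB.exchange_isBase_of_indep he.2⟩

lemma IsBase.exchange_isBase_iff_of_exchange (hB : M.IsBase B) (hx : x ∈ B)
    (hxy : M.IsBase (insert y (B \ {x}))) (he : e ∈ M.E \ B) (hey : e ≠ y)
    (hxe : ¬ M.IsBase (insert e (B \ {x}))) (hf : f ∈ B) (hfx : f ≠ x) :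
    M.IsBase (insert e (insert y (B \ {x}) \ {f})) ↔ M.IsBase (insert e (B \ {f})) := by
  have he' : e ∈ M.E \ insert y (B \ {x}) := ⟨he.1, by simp [hey, he.2]⟩
  rw [hB.insert_sdiff_isBase_iff_mem_fundCircuit he hf,
    hxy.insert_sdiff_isBase_iff_mem_fundCircuit he' (by simp [hf, hfx])]
  rw [hB.insert_sdiff_isBase_iff_mem_fundCircuit he hx] at hxe
  suffices M.fundCircuit e B ⊆ insert e (insert y (B \ {x})) by
    rw [← (hB.fundCircuit_isCircuit he.1 he.2).eq_fundCircuit_of_subset hxy.indep this]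
  intro z hz
  obtain rfl | hzB := (M.fundCircuit_subset_insert e B) hz
  · exact mem_insert _ _
  · exact mem_insert_of_mem _ (mem_insert_of_mem _ ⟨hzB, fun h => hxe (h ▸ hz)⟩)

theorem IsBase.isBase_of_triangular_exchange {ι : Type*} [LinearOrder ι] [DecidableEq β]
    (N : Finset (β × β)) (r : β × β → ι) (hr : Set.InjOn r N) (hB : M.IsBase B)
    (harc : ∀ a ∈ N, a.1 ∈ B ∧ a.2 ∉ B ∧ M.IsBase (insert a.2 (B \ {a.1})))
    (hshort : ∀ a ∈ N, ∀ b ∈ N, r a < r b → ¬ M.IsBase (insert b.2 (B \ {a.1}))) :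
    M.IsBase ((B \ Prod.fst '' (N : Set (β × β))) ∪ Prod.snd '' (N : Set (β × β))) := by
  induction N using Finset.induction_on_min_value r generalizing B with
  | empty => simpa using hB
  | insert a s has hmin ih =>
    have hs : ∀ b ∈ s, b ∈ insert a s := fun b hb => Finset.mem_insert_of_mem hb
    obtain ⟨ha₁, ha₂, hab⟩ := harc a (Finset.mem_insert_self a s)
    have hlt : ∀ b ∈ s, r a < r b := fun b hb => lt_of_le_of_ne (hmin b hb)
      fun h => has (hr (by simp) (by simp [hb]) h ▸ hb)
    have hsa : ∀ b ∈ s, ¬ M.IsBase (insert b.2 (B \ {a.1})) :=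
      fun b hb => hshort a (Finset.mem_insert_self a s) b (hs b hb) (hlt b hb)
    have hfst : ∀ b ∈ s, b.1 ≠ a.1 := fun b hb h => hsa b hb (h ▸ (harc b (hs b hb)).2.2)
    have hsnd : ∀ b ∈ s, b.2 ≠ a.2 := fun b hb h => hsa b hb (h ▸ hab)
    have hE : ∀ b ∈ s, b.2 ∈ M.E \ B := fun b hb =>
      ⟨(harc b (hs b hb)).2.2.subset_ground (mem_insert _ _), (harc b (hs b hb)).2.1⟩
    -- No fundamental circuit of a later head contains `a.1`, so exchanging `a` first preserves them.
    have hiff : ∀ b ∈ s, ∀ c ∈ s, M.IsBase (insert b.2 (insert a.2 (B \ {a.1}) \ {c.1})) ↔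
        M.IsBase (insert b.2 (B \ {c.1})) := fun b hb c hc =>
      hB.exchange_isBase_iff_of_exchange ha₁ hab (hE b hb) (hsnd b hb) (hsa b hb)
        (harc c (hs c hc)).1 (hfst c hc)
    have key := ih (hr.mono (by simp)) hab
      (fun b hb => ⟨by simp [(harc b (hs b hb)).1, hfst b hb],
        by simp [(harc b (hs b hb)).2.1, hsnd b hb], (hiff b hb b hb).2 (harc b (hs b hb)).2.2⟩)
      (fun c hc b hb hcb => by rw [hiff b hb c hc]; exact hshort c (hs c hc) b (hs b hb) hcb)
    have htail : ∀ b ∈ s, b.1 ≠ a.2 := fun b hb h => ha₂ (h ▸ (harc b (hs b hb)).1)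
    convert key using 1
    ext z
    simp only [Finset.coe_insert, image_insert_eq, mem_union, mem_sdiff, mem_insert_iff,
      mem_singleton_iff, mem_image, Finset.mem_coe]
    grind

end Matroid

namespace FinMatroid

def toMatroid (M : FinMatroid α) : Matroid α :=
  Matroid.ofIsBaseOfFinite M.E.finite_toSet (fun X => ∃ B, M.Bases B ∧ (B : Set α) = X)
    (let ⟨B, hB⟩ := M.bases_nonempty; ⟨_, B, hB, rfl⟩)
    (by
      rintro _ _ ⟨B, hB, rfl⟩ ⟨B', hB', rfl⟩ x ⟨hxB, hxB'⟩
      obtain ⟨y, hyB', hyB, hyx⟩ := M.basis_exchange B B' hB hB' x hxB hxB'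
      exact ⟨y, ⟨hyB', hyB⟩, _, hyx, by simp⟩)
    (by rintro _ ⟨B, hB, rfl⟩; exact_mod_cast M.bases_subset_ground B hB)

@[simp]
lemma toMatroid_isBase_coe (M : FinMatroid α) (B : Finset α) :
    M.toMatroid.IsBase B ↔ M.Bases B := by
  change (∃ B', M.Bases B' ∧ (B' : Set α) = B) ↔ _
  simp only [Finset.coe_inj, exists_eq_right]

end FinMatroid

lemma List.mem_dropLast_or_getLast?_eq {β : Type*} {l : List β} {x : β} (hx : x ∈ l) :
    x ∈ l.dropLast ∨ l.getLast? = some x := by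
  have hl : l ≠ [] := List.ne_nil_of_mem hx
  rw [← List.dropLast_concat_getLast hl, List.mem_append, List.mem_singleton] at hx
  rw [List.getLast?_eq_some_getLast hl]
  exact hx.imp_right (congrArg some ∘ Eq.symm)

section WalkLists

variable {β : Type u}

lemma map_fst_pathArcs (P : List β) : (pathArcs P).map Prod.fst = P.dropLast := by
  induction P with
  | nil => rfl
  | cons v rest ih =>
    cases rest with
    | nil => rfl
    | cons w r => exact congrArg (v :: ·) ih

lemma map_snd_pathArcs (P : List β) : (pathArcs P).map Prod.snd = P.tail :=
  List.map_snd_zip (by simp)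

lemma map_fst_cycleArcs (C : List β) : (cycleArcs C).map Prod.fst = C := by
  cases C with
  | nil => rfl
  | cons v rest => exact List.map_fst_zip (by simp)

lemma map_snd_cycleArcs_perm (C : List β) : ((cycleArcs C).map Prod.snd).Perm C := by
  cases C with
  | nil => rfl
  | cons v rest =>
    rw [cycleArcs, List.map_snd_zip (by simp)]
    exact List.perm_append_singleton v rest

end WalkLists

namespace IsValidArcSet

variable {M : Fin k → FinMatroid α} {B : Fin k → Finset α} {S : Finset (α × α)}

lemma arcD (h : IsValidArcSet M B S) : ∀ a ∈ S, ArcD M B a := by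
  obtain ⟨P, C, -, -, -, hP, hC, -, rfl⟩ := h
  intro a ha
  rcases List.mem_append.1 (List.mem_toFinset.1 ha) with ha | ha
  exacts [hP a ha, hC a ha]

lemma injOn_fst (h : IsValidArcSet M B S) : Set.InjOn Prod.fst (S : Set (α × α)) := by
  obtain ⟨P, C, hP, hC, hPC, -, -, -, rfl⟩ := h
  have hnd : ((pathArcs P ++ cycleArcs C).map Prod.fst).Nodup := by
    rw [List.map_append, map_fst_pathArcs, map_fst_cycleArcs]
    exact List.nodup_append.2 ⟨hP.sublist (List.dropLast_sublist P), hC,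
      fun a ha b hb hab => hPC a (List.mem_of_mem_dropLast ha) (hab ▸ hb)⟩
  exact fun a ha b hb =>
    List.inj_on_of_nodup_map hnd (List.mem_toFinset.1 ha) (List.mem_toFinset.1 hb)

lemma injOn_snd (h : IsValidArcSet M B S) : Set.InjOn Prod.snd (S : Set (α × α)) := by
  obtain ⟨P, C, hP, hC, hPC, -, -, -, rfl⟩ := h
  have hnd : ((pathArcs P ++ cycleArcs C).map Prod.snd).Nodup := by
    rw [List.map_append, map_snd_pathArcs, ((map_snd_cycleArcs_perm C).append_left _).nodup_iff]
    exact List.nodup_append.2 ⟨hP.sublist (List.tail_sublist P), hC,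
      fun a ha b hb hab => hPC a (List.mem_of_mem_tail ha) (hab ▸ hb)⟩
  exact fun a ha b hb =>
    List.inj_on_of_nodup_map hnd (List.mem_toFinset.1 ha) (List.mem_toFinset.1 hb)

lemma free_or_next (h : IsValidArcSet M B S) :
    ∀ a ∈ S, FreeVertex M B a.2 ∨ ∃ b ∈ S, b.1 = a.2 := by
  obtain ⟨P, C, -, -, -, -, -, hlast, rfl⟩ := h
  intro a ha
  have hnext : a.2 ∈ P.dropLast ++ C → ∃ b ∈ (pathArcs P ++ cycleArcs C).toFinset, b.1 = a.2 := by
    intro hv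
    rw [← map_fst_pathArcs, ← map_fst_cycleArcs C, ← List.map_append] at hv
    obtain ⟨b, hb, hba⟩ := List.mem_map.1 hv
    exact ⟨b, List.mem_toFinset.2 hb, hba⟩
  rcases List.mem_append.1 (List.mem_toFinset.1 ha) with ha | ha
  · have hP : a.2 ∈ P := List.mem_of_mem_tail (map_snd_pathArcs P ▸ List.mem_map_of_mem ha)
    rcases List.mem_dropLast_or_getLast?_eq hP with hv | hv
    · exact Or.inr (hnext (List.mem_append_left _ hv))
    · exact Or.inl (hlast _ hv)
  · exact Or.inr (hnext (List.mem_append_right _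
      ((map_snd_cycleArcs_perm C).subset (List.mem_map_of_mem ha))))

end IsValidArcSet

def tadpoleRank (m p : ℕ) : ℕ := if p = m then 0 else p

lemma tadpolePrec_iff_rank_lt {m p q : ℕ} :
    TadpolePrec m p q ↔ tadpoleRank m p < tadpoleRank m q := by
  unfold TadpolePrec tadpoleRank
  split_ifs <;> omega

lemma TadpoleWalk.x_eq_of_rank_eq {M : Fin k → FinMatroid α} {B : Fin k → Finset α}
    (W : TadpoleWalk M B) {p q : ℕ} (h : tadpoleRank W.m p = tadpoleRank W.m q) :
    W.x p = W.x q := by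
  unfold tadpoleRank at h
  split_ifs at h with hp hq hq <;> subst_vars
  exacts [rfl, W.closed, W.closed.symm, rfl]

lemma ShortcutFree.exists_rank {M : Fin k → FinMatroid α} {B : Fin k → Finset α}
    {W : TadpoleWalk M B} (hW : ShortcutFree W) {S : Finset (α × α)}
    (hsub : (S : Set (α × α)) ⊆ ArcsOfWalk W) (hfst : Set.InjOn Prod.fst (S : Set (α × α))) :
    ∃ r : α × α → ℕ, Set.InjOn r S ∧ ∀ i, ∀ a ∈ S, ∀ b ∈ S, ArcOf M B i a → ArcOf M B i b →
      r a < r b → ¬ ArcOf M B i (a.1, b.2) := by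
  have hpos : ∀ a ∈ S, ∃ t, t < W.n ∧ a = (W.x t, W.x (t + 1)) := fun a ha => hsub ha
  choose! pos hpos_lt hpos_eq using hpos
  refine ⟨fun a => tadpoleRank W.m (pos a), fun a ha b hb hab => hfst ha hb ?_, ?_⟩
  · rw [hpos_eq a ha, hpos_eq b hb]
    exact W.x_eq_of_rank_eq hab
  · intro i a ha b hb hai hbi hab
    rw [hpos_eq a ha] at hai ⊢
    rw [hpos_eq b hb] at hbi ⊢
    exact hW i _ (hpos_lt a ha) _ (hpos_lt b hb) hai hbi (tadpolePrec_iff_rank_lt.2 hab)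

section ApplyArcs

variable (M : Fin k → FinMatroid α) (B : Fin k → Finset α) (S : Finset (α × α))

lemma arcOf_iff_isBase {i : Fin k} {a : α × α} : ArcOf M B i a ↔
    a.1 ∈ B i ∧ a.2 ∉ B i ∧ (M i).toMatroid.IsBase (insert a.2 (↑(B i) \ {a.1})) := by
  rw [← Finset.coe_erase, ← Finset.coe_insert, FinMatroid.toMatroid_isBase_coe, ArcOf]
  exact ⟨fun ⟨h₁, _, h₂, h₃⟩ => ⟨h₁, h₂, h₃⟩, fun ⟨h₁, h₂, h₃⟩ =>
    ⟨h₁, (M i).bases_subset_ground _ h₃ (Finset.mem_insert_self _ _), h₂, h₃⟩⟩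

lemma mem_applyArcs {i : Fin k} {v : α} : v ∈ applyArcs M B S i ↔
    (v ∈ B i ∧ ∀ a ∈ S, ArcOf M B i a → a.1 ≠ v) ∨ ∃ a ∈ S, ArcOf M B i a ∧ a.2 = v := by
  simp only [applyArcs, Finset.mem_union, Finset.mem_sdiff, Finset.mem_image, Finset.mem_filter]
  grind

lemma bases_applyArcs {ι : Type*} [LinearOrder ι] {i : Fin k} (hB : (M i).Bases (B i))
    (r : α × α → ι) (hr : Set.InjOn r S)
    (hshort : ∀ a ∈ S, ∀ b ∈ S, ArcOf M B i a → ArcOf M B i b → r a < r b →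
      ¬ ArcOf M B i (a.1, b.2)) :
    (M i).Bases (applyArcs M B S i) := by
  classical
  have hN : ∀ a ∈ S.filter (ArcOf M B i), a ∈ S ∧ ArcOf M B i a := fun a => Finset.mem_filter.1
  have key := ((M i).toMatroid_isBase_coe (B i)).2 hB |>.isBase_of_triangular_exchange
    (S.filter (ArcOf M B i)) r (hr.mono fun a ha => (hN a ha).1)
    (fun a ha => (arcOf_iff_isBase M B).1 (hN a ha).2)
    (fun a ha b hb hab hbase => hshort a (hN a ha).1 b (hN b hb).1 (hN a ha).2 (hN b hb).2 hab
      ((arcOf_iff_isBase M B).2 ⟨((hN a ha).2).1, ((hN b hb).2).2.2.1, hbase⟩))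
  rw [← FinMatroid.toMatroid_isBase_coe]
  convert key using 1
  simp [applyArcs]

lemma disjoint_applyArcs (hdisj : ∀ i j, i ≠ j → Disjoint (B i) (B j))
    (harc : ∀ a ∈ S, ArcD M B a) (hsnd : Set.InjOn Prod.snd (S : Set (α × α)))
    (hnext : ∀ a ∈ S, FreeVertex M B a.2 ∨ ∃ b ∈ S, b.1 = a.2) {i j : Fin k} (hij : i ≠ j) :
    Disjoint (applyArcs M B S i) (applyArcs M B S j) := by
  have hkept : ∀ {i : Fin k} {v : α}, v ∈ B i → (∀ a ∈ S, ArcOf M B i a → a.1 ≠ v) →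
      ∀ b ∈ S, b.2 ≠ v := by
    intro i v hv hnotail b hb hbv
    rcases hnext b hb with hfree | ⟨c, hc, hcb⟩
    · exact hfree.2 i (hbv ▸ hv)
    · obtain ⟨i', hci'⟩ := harc c hc
      obtain rfl : i' = i := by
        by_contra hne
        exact Finset.disjoint_left.1 (hdisj i' i hne) hci'.1 (hcb ▸ hbv ▸ hv)
      exact hnotail c hc hci' (hcb.trans hbv)
  rw [Finset.disjoint_left]
  intro v hvi hvj
  rcases (mem_applyArcs M B S).1 hvi with ⟨hvBi, hnti⟩ | ⟨a, ha, hai, hav⟩ <;>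
    rcases (mem_applyArcs M B S).1 hvj with ⟨hvBj, hntj⟩ | ⟨b, hb, hbj, hbv⟩
  · exact Finset.disjoint_left.1 (hdisj i j hij) hvBi hvBj
  · exact hkept hvBi hnti b hb hbv
  · exact hkept hvBj hntj a ha hav
  · obtain rfl : a = b := hsnd ha hb (hav.trans hbv.symm)
    exact Finset.disjoint_left.1 (hdisj i j hij) hai.1 hbj.1

end ApplyArcs

/-- **Theorem (statement 7).** If `W` is a shortcut-free tadpole-walk in
`D(𝕄, 𝔹)` and `S` is (the arc set of) a valid subgraph of `W`, then
`𝔹 △ S = (B 1 △ (S ∩ A 1), …, B k △ (S ∩ A k))` is a feasible basis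
sequence of `𝕄`. -/
theorem feasible_of_valid_subgraph_of_shortcutFree {α : Type u} [DecidableEq α] {k : ℕ}
    (M : Fin k → FinMatroid α) (B : Fin k → Finset α) (hB : FeasibleSeq M B)
    (W : TadpoleWalk M B) (hW : ShortcutFree W)
    (S : Finset (α × α)) (hsub : (S : Set (α × α)) ⊆ ArcsOfWalk W)
    (hvalid : IsValidArcSet M B S) :
    FeasibleSeq M (fun i => applyArcs M B S i) := by
  obtain ⟨hbases, hdisj⟩ := hB
  obtain ⟨r, hr, hshort⟩ := hW.exists_rank hsub hvalid.injOn_fst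
  exact ⟨fun i => bases_applyArcs M B S (hbases i) r hr (hshort i),
    fun i j hij => disjoint_applyArcs M B S hdisj hvalid.arcD hvalid.injOn_snd
      hvalid.free_or_next hij⟩
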